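/- Let (X, μ) be a measure space and let ξ, f : X → ℝ be square-integrable (L²) functions with |f| ≤ 1 almost everywhere. Then the following are equivalent: (i) for every square-integrable function z : X → ℝ with |z| ≤ 1 almost everywhere, ∫ ξ·(f - z) dμ ≥ 0; (ii) for almost every x ∈ X and every c ∈ [-1,1], ξ(x)·(f(x) - c) ≥ 0, i.e. ξ(x) ∈ ∂I_{[-1,1]}(f(x)) almost everywhere. -/

import Mathlib

/-!
Test the first condition with `z = P (f + ξ)`, where `P` is the projection of `ℝ` onto `[-1, 1]`.
Since `|P y| ≤ |y|`, `z` is square-integrable, and since `P` is monotone and fixes `f x`, the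
integrand `ξ (f - z)` is pointwise nonpositive. A nonpositive function with nonnegative integral
vanishes a.e., and `ξ x (f x - P (f x + ξ x)) = 0` says exactly that `f x = ±1` with the sign of
`ξ x` wherever `ξ x ≠ 0`. The converse is the integral of the pointwise inequality at `c = z x`.
-/

open MeasureTheory

def projUnit (y : ℝ) : ℝ := max (-1) (min 1 y)

lemma continuous_projUnit : Continuous projUnit := by
  unfold projUnit
  fun_prop

lemma abs_projUnit_le_one (y : ℝ) : |projUnit y| ≤ 1 :=
  abs_le.mpr ⟨le_max_left _ _, max_le (by norm_num) (min_le_left _ _)⟩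

lemma abs_projUnit_le (y : ℝ) : |projUnit y| ≤ |y| := by
  unfold projUnit
  grind [abs_le]

lemma mul_sub_projUnit_add_nonpos {a : ℝ} (ha : |a| ≤ 1) (b : ℝ) :
    b * (a - projUnit (a + b)) ≤ 0 := by
  unfold projUnit
  rw [abs_le] at ha
  rcases le_total 0 b with hb | hb
  · exact mul_nonpos_of_nonneg_of_nonpos hb (by grind)
  · exact mul_nonpos_of_nonpos_of_nonneg hb (by grind)

lemma mul_sub_nonneg_of_mul_sub_projUnit_add_eq_zero {a b : ℝ} (ha : |a| ≤ 1)
    (h : b * (a - projUnit (a + b)) = 0) : ∀ c ∈ Set.Icc (-1 : ℝ) 1, 0 ≤ b * (a - c) := by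
  rintro c ⟨hc₁, hc₂⟩
  unfold projUnit at h
  rw [abs_le] at ha
  rcases mul_eq_zero.mp h with rfl | h
  · simp
  rcases lt_trichotomy b 0 with hb | rfl | hb
  · obtain rfl : a = -1 := by grind
    nlinarith
  · simp
  · obtain rfl : a = 1 := by grind
    nlinarith

lemma ae_eq_zero_of_nonpos_of_integral_nonneg {X : Type*} [MeasurableSpace X] {μ : Measure X}
    {h : X → ℝ} (hint : Integrable h μ) (hle : h ≤ᵐ[μ] 0) (h0 : 0 ≤ ∫ x, h x ∂μ) :
    h =ᵐ[μ] 0 := by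
  have hneg : 0 ≤ᵐ[μ] -h := by
    filter_upwards [hle] with x hx using neg_nonneg.mpr hx
  have hzero : ∫ x, (-h) x ∂μ = 0 :=
    le_antisymm (by simpa [integral_neg] using h0) (integral_nonneg_of_ae hneg)
  filter_upwards [(integral_eq_zero_iff_of_nonneg_ae hneg hint.neg).mp hzero] with x hx
  simpa using hx

/-- Let `ξ, f ∈ L²(μ)` with `|f| ≤ 1` a.e. Then `∫ ξ·(f - z) dμ ≥ 0` for every
`z ∈ L²(μ)` with `|z| ≤ 1` a.e., if and only if for a.e. `x` and every `c ∈ [-1,1]`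
one has `ξ(x)·(f(x) - c) ≥ 0`, i.e. `ξ(x) ∈ ∂I_{[-1,1]}(f(x))` a.e. -/
theorem stmt_14 {X : Type*} [MeasurableSpace X] (μ : Measure X)
    (ξ f : X → ℝ) (hξ : MemLp ξ 2 μ) (hf : MemLp f 2 μ)
    (hf1 : ∀ᵐ x ∂μ, |f x| ≤ 1) :
    (∀ z : X → ℝ, MemLp z 2 μ → (∀ᵐ x ∂μ, |z x| ≤ 1) →
        0 ≤ ∫ x, ξ x * (f x - z x) ∂μ) ↔
      (∀ᵐ x ∂μ, ∀ c ∈ Set.Icc (-1 : ℝ) 1, 0 ≤ ξ x * (f x - c)) := by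
  constructor
  · intro H
    set z := fun x => projUnit (f x + ξ x)
    have hz : MemLp z 2 μ :=
      (hf.add hξ).of_le
        (continuous_projUnit.comp_aestronglyMeasurable (hf.add hξ).aestronglyMeasurable)
        (ae_of_all _ fun x => abs_projUnit_le _)
    have hnonpos : (fun x => ξ x * (f x - z x)) ≤ᵐ[μ] 0 := by
      filter_upwards [hf1] with x hx using mul_sub_projUnit_add_nonpos hx (ξ x)
    have hzero := ae_eq_zero_of_nonpos_of_integral_nonneg (hξ.integrable_mul (hf.sub hz))
      hnonpos (H z hz (ae_of_all _ fun x => abs_projUnit_le_one _))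
    filter_upwards [hf1, hzero] with x hx hx0
    exact mul_sub_nonneg_of_mul_sub_projUnit_add_eq_zero hx hx0
  · intro H z _ hz1
    refine integral_nonneg_of_ae ?_
    filter_upwards [H, hz1] with x hx hzx using hx (z x) (abs_le.mp hzx)
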